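/- arXiv:2211.03918 — 6 statements merged into one kernel-verified Lean document; each statement's English description precedes it below -/
import Mathlib

section
/- Let n ≥ 2, 1 ≤ r < n, C = r·(binom(n-1,r-1))⁻¹, and F(s,y) = C·√(1 - y^(2/r))·s^(r-1) - (n-r)·y/s. Any C¹ solution τ : [s₀,∞) → [-1,1] of τ' = F(s,τ) with τ(s₀) = -1 is strictly increasing on [s₀, ∞). -/
/-!
It suffices that `φ(s) = F(s, τ(s)) = τ'(s)` is positive on `[s₀, ∞)`. The field is positive
wherever `τ ≤ 0` (in particular at `s₀`) and negative where `τ = 1`, so at a first zero `s₁` of `φ`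
we have `0 < τ(s₁) < 1` and `τ'(s₁) = 0`. Differentiating `φ` at `s₁`, only the explicit
`s`-dependence of `F` survives, and it gives `φ'(s₁) > 0`. Then `φ < 0` just left of `s₁`,
contradicting the choice of `s₁`.
-/

open Real Set Filter Topology

lemma eventually_nhdsLT_neg_of_hasDerivAt_pos {φ : ℝ → ℝ} {d s : ℝ} (hφ : HasDerivAt φ d s)
    (hd : 0 < d) (hzero : φ s = 0) : ∀ᶠ t in 𝓝[<] s, φ t < 0 := by
  have hslope : ∀ᶠ t in 𝓝[<] s, 0 < slope φ s t :=
    ((hasDerivAt_iff_tendsto_slope.mp hφ).eventually (eventually_gt_nhds hd)).filter_mono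
      (nhdsLT_le_nhdsNE s)
  filter_upwards [hslope, self_mem_nhdsWithin] with t ht hts using neg_of_slope_pos hts ht hzero

lemma pos_on_Ici_of_hasDerivAt_pos_of_eq_zero {φ : ℝ → ℝ} {a : ℝ} (hcont : ContinuousOn φ (Ici a))
    (ha : 0 < φ a) (hzero : ∀ s ∈ Ioi a, φ s = 0 → ∃ d > 0, HasDerivAt φ d s) :
    ∀ s ∈ Ici a, 0 < φ s := by
  by_contra! hneg
  set Z := Ici a ∩ φ ⁻¹' Iic 0
  have hZne : Z.Nonempty := hneg
  have hZbdd : BddBelow Z := ⟨a, fun _ hs => hs.1⟩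
  have hs₁ : sInf Z ∈ Z :=
    (hcont.preimage_isClosed_of_isClosed isClosed_Ici isClosed_Iic).csInf_mem hZne hZbdd
  set s₁ := sInf Z
  have hpos_before : ∀ t ∈ Ico a s₁, 0 < φ t := fun t ht =>
    not_le.mp fun h => (csInf_le hZbdd ⟨ht.1, h⟩).not_gt ht.2
  have has₁ : a < s₁ := lt_of_le_of_ne hs₁.1 fun h => (h ▸ ha).not_ge hs₁.2
  -- the intermediate value theorem on `[a, s₁]` puts a zero of `φ` in `Z`, necessarily at `s₁`
  obtain ⟨c, hc, hφc⟩ : ∃ c ∈ Icc a s₁, φ c = 0 :=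
    intermediate_value_Icc' has₁.le (hcont.mono Icc_subset_Ici_self) ⟨hs₁.2, ha.le⟩
  have hcs₁ : c = s₁ := le_antisymm hc.2 (csInf_le hZbdd ⟨hc.1, hφc.le⟩)
  rw [hcs₁] at hφc
  obtain ⟨d, hd, hφd⟩ := hzero s₁ has₁ hφc
  obtain ⟨t, hφt, ht⟩ := ((eventually_nhdsLT_neg_of_hasDerivAt_pos hφd hd hφc).and
    (Ico_mem_nhdsLT has₁)).exists
  exact (hpos_before t ht).not_gt hφt

noncomputable def translatorField (C b e : ℝ) (k : ℕ) (s y : ℝ) : ℝ :=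
  C * √(1 - |y| ^ e) * s ^ k - b * y / s

section translatorField

variable {C b e : ℝ} {k : ℕ}

lemma translatorField_pos_of_nonpos (hC : 0 < C) (hb : 0 < b) (he : 0 < e) {s y : ℝ}
    (hs : 0 < s) (hy : y ≤ 0) : 0 < translatorField C b e k s y := by
  unfold translatorField
  rcases hy.lt_or_eq with hy | rfl
  · have : 0 < -(b * y / s) := by
      rw [← neg_div]; exact div_pos (by nlinarith) hs
    have : 0 ≤ C * √(1 - |y| ^ e) * s ^ k := by positivity
    linarith
  · simp only [abs_zero, zero_rpow he.ne', sub_zero, sqrt_one, mul_one, mul_zero, zero_div]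
    positivity

lemma translatorField_one_neg (hb : 0 < b) {s : ℝ} (hs : 0 < s) :
    translatorField C b e k s 1 < 0 := by
  simp only [translatorField, abs_one, one_rpow, sub_self, sqrt_zero, mul_zero, zero_mul, mul_one,
    zero_sub, Left.neg_neg_iff]
  positivity

lemma continuousOn_translatorField_comp (he : 0 ≤ e) {y : ℝ → ℝ} {S : Set ℝ}
    (hy : ContinuousOn y S) (hS : ∀ s ∈ S, s ≠ 0) :
    ContinuousOn (fun s => translatorField C b e k s (y s)) S := by
  unfold translatorField
  exact ((continuousOn_const.mul ((continuousOn_const.sub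
    (hy.abs.rpow_const fun _ _ => Or.inr he)).sqrt)).mul (continuousOn_id.pow k)).sub
    ((continuousOn_const.mul hy).div continuousOn_id hS)

lemma hasDerivAt_translatorField_comp {y : ℝ → ℝ} {s : ℝ} (hy : HasDerivAt y 0 s)
    (hy0 : y s ≠ 0) (hy1 : |y s| ^ e ≠ 1) (hs : s ≠ 0) :
    HasDerivAt (fun t => translatorField C b e k t (y t))
      (C * √(1 - |y s| ^ e) * (k * s ^ (k - 1)) + b * y s / s ^ 2) s := by
  have habs : HasDerivAt (fun t => |y t|) 0 s := by
    have := (hasDerivAt_abs hy0).comp s hy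
    rwa [mul_zero] at this
  have hroot := (((habs.rpow_const (Or.inl (abs_ne_zero.mpr hy0))).const_sub 1).sqrt
    (sub_ne_zero.mpr hy1.symm)).const_mul C
  refine ((hroot.mul (hasDerivAt_pow k s)).sub
    ((hy.const_mul b).div (hasDerivAt_id' s) hs)).congr_deriv ?_
  ring

lemma exists_hasDerivAt_pos_of_translatorField_eq_zero (hC : 0 < C) (hb : 0 < b) (he : 0 < e)
    {y : ℝ → ℝ} {s : ℝ} (hs : 0 < s) (hy : HasDerivAt y (translatorField C b e k s (y s)) s)
    (hy1 : y s ≤ 1) (hzero : translatorField C b e k s (y s) = 0) :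
    ∃ d > 0, HasDerivAt (fun t => translatorField C b e k t (y t)) d s := by
  have hy_pos : 0 < y s :=
    not_le.mp fun h => (translatorField_pos_of_nonpos hC hb he hs h).ne' hzero
  have hy_lt : y s < 1 := hy1.lt_of_ne fun h => (translatorField_one_neg hb hs).ne (h ▸ hzero)
  have hpow_lt : |y s| ^ e < 1 := rpow_lt_one (abs_nonneg _) ((abs_of_pos hy_pos).trans_lt hy_lt) he
  refine ⟨_, ?_, hasDerivAt_translatorField_comp (hzero ▸ hy) hy_pos.ne' hpow_lt.ne hs.ne'⟩
  have : 0 ≤ C * √(1 - |y s| ^ e) * (k * s ^ (k - 1)) := by positivity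
  have : 0 < b * y s / s ^ 2 := by positivity
  linarith

end translatorField

theorem tau_minus_strictMono_general (n r : ℕ) (hr1 : 1 ≤ r) (hr2 : r < n)
    (C : ℝ) (hC : C = (r : ℝ) * ((n - 1).choose (r - 1) : ℝ)⁻¹)
    (F : ℝ → ℝ → ℝ)
    (hF : ∀ s y, F s y = C * Real.sqrt (1 - |y| ^ ((2 : ℝ) / r)) * s ^ (r - 1)
      - ((n : ℝ) - r) * y / s)
    (s₀ : ℝ) (hs₀ : 0 < s₀) (τ : ℝ → ℝ)
    (hmem : ∀ s ∈ Ici s₀, τ s ∈ Icc (-1 : ℝ) 1)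
    (hode : ∀ s ∈ Ici s₀, HasDerivAt τ (F s (τ s)) s)
    (hinit : τ s₀ = -1) :
    StrictMonoOn τ (Ici s₀) := by
  have hr : (0 : ℝ) < r := Nat.cast_pos.mpr hr1
  have hCpos : 0 < C :=
    hC ▸ mul_pos hr (inv_pos.mpr (Nat.cast_pos.mpr (Nat.choose_pos (by omega))))
  have hb : (0 : ℝ) < n - r := sub_pos.mpr (Nat.cast_lt.mpr hr2)
  have he : (0 : ℝ) < 2 / r := by positivity
  obtain rfl : F = translatorField C (n - r) (2 / r) (r - 1) := funext fun s => funext (hF s)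
  have hτ : ContinuousOn τ (Ici s₀) := fun s hs => (hode s hs).continuousAt.continuousWithinAt
  have hderiv_pos : ∀ s ∈ Ici s₀, 0 < translatorField C (n - r) (2 / r) (r - 1) s (τ s) :=
    pos_on_Ici_of_hasDerivAt_pos_of_eq_zero
      (continuousOn_translatorField_comp he.le hτ fun s hs => (hs₀.trans_le hs).ne')
      (hinit ▸ translatorField_pos_of_nonpos hCpos hb he hs₀ (by norm_num))
      fun s hs => exists_hasDerivAt_pos_of_translatorField_eq_zero hCpos hb he (hs₀.trans hs)
        (hode s (Ioi_subset_Ici_self hs)) (hmem s (Ioi_subset_Ici_self hs)).2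
  refine strictMonoOn_of_deriv_pos (convex_Ici s₀) hτ fun s hs => ?_
  rw [interior_Ici] at hs
  rw [(hode s (Ioi_subset_Ici_self hs)).deriv]
  exact hderiv_pos s (Ioi_subset_Ici_self hs)

/-- Euclidean rotational translator ODE: a solution with τ(s₀) = -1 is strictly
increasing on [s₀, ∞). -/
theorem tau_minus_strictMono (n r : ℕ) (hn : 2 ≤ n) (hr1 : 1 ≤ r) (hr2 : r < n)
    (C : ℝ) (hC : C = (r : ℝ) * ((n - 1).choose (r - 1) : ℝ)⁻¹)
    (F : ℝ → ℝ → ℝ)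
    (hF : ∀ s y, F s y = C * Real.sqrt (1 - |y| ^ ((2 : ℝ) / r)) * s ^ (r - 1)
      - ((n : ℝ) - r) * y / s)
    (s₀ : ℝ) (hs₀ : 0 < s₀) (τ : ℝ → ℝ)
    (hmem : ∀ s ∈ Ici s₀, τ s ∈ Icc (-1 : ℝ) 1)
    (hode : ∀ s ∈ Ici s₀, HasDerivAt τ (F s (τ s)) s)
    (hinit : τ s₀ = -1) :
    StrictMonoOn τ (Ici s₀) :=
  tau_minus_strictMono_general n r hr1 hr2 C hC F hF s₀ hs₀ τ hmem hode hinit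
end

section
/- Let n ≥ 2, 1 ≤ r < n, C = r·(binom(n-1,r-1))⁻¹, and F(s,y) = C·√(1 - y^(2/r))·s^(r-1) - (n-r)·y/s on (0,∞)×[-1,1]. If τ : [s₀, ∞) → [-1,1] solves τ' = F(s,τ) and has a critical point s* > s₀ with τ(s*) > 0 and τ(s*) < 1, then τ''(s*) > 0; in particular every interior critical point of a positive solution is a strict local minimum. -/
open Real Set

/-!
Differentiating the ODE along the solution gives `τ'' = ∂ₛF(s, τ) + ∂_yF(s, τ) τ'`. At a critical
point only `∂ₛF` survives, and it is a nonnegative term plus `(n - r) τ / s² > 0`.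
-/

/-- The right-hand side `F(s, y)` of the rotational translator ODE `τ' = F(s, τ)`. -/
noncomputable def rotTranslatorRhs (n r : ℕ) (C s y : ℝ) : ℝ :=
  C * √(1 - y ^ ((2 : ℝ) / r)) * s ^ (r - 1) - ((n : ℝ) - r) * y / s

/-- The partial derivative `∂ₛF(s, y)` of `rotTranslatorRhs`. -/
noncomputable def rotTranslatorRhsDerivS (n r : ℕ) (C s y : ℝ) : ℝ :=
  C * ((r - 1 : ℕ) : ℝ) * √(1 - y ^ ((2 : ℝ) / r)) * s ^ (r - 2) + ((n : ℝ) - r) * y / s ^ 2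

theorem differentiableAt_sqrt_one_sub_rpow {p y : ℝ} (hy : y ≠ 0) (hyp : y ^ p ≠ 1) :
    DifferentiableAt ℝ (fun x : ℝ => √(1 - x ^ p)) y :=
  ((differentiableAt_const 1).sub (differentiableAt_id.rpow_const (Or.inl hy))).sqrt
    (sub_ne_zero.mpr hyp.symm)

theorem hasDerivAt_rotTranslatorRhs_of_hasDerivAt_zero {n r : ℕ} (hr : r ≠ 0) (C : ℝ)
    {τ : ℝ → ℝ} {s : ℝ} (hτ : HasDerivAt τ 0 s) (hs : s ≠ 0)
    (hpos : 0 < τ s) (hlt : τ s < 1) :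
    HasDerivAt (fun t => rotTranslatorRhs n r C t (τ t))
      (rotTranslatorRhsDerivS n r C s (τ s)) s := by
  have hrpow : τ s ^ ((2 : ℝ) / r) ≠ 1 :=
    (rpow_lt_one hpos.le hlt (by positivity)).ne
  have hsqrt : HasDerivAt (fun t => √(1 - τ t ^ ((2 : ℝ) / r))) 0 s := by
    have := (differentiableAt_sqrt_one_sub_rpow hpos.ne' hrpow).hasDerivAt.comp s hτ
    rwa [mul_zero] at this
  have hfirst := (hsqrt.const_mul C).mul (hasDerivAt_pow (r - 1) s)
  have hsecond := (hτ.const_mul ((n : ℝ) - r)).div (hasDerivAt_id s) hs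
  refine (hfirst.sub hsecond).congr_deriv ?_
  rw [rotTranslatorRhsDerivS, show r - 1 - 1 = r - 2 by omega, id]
  ring

theorem rotTranslatorRhsDerivS_pos {n r : ℕ} (hr : r < n) {C : ℝ} (hC : 0 ≤ C) {s y : ℝ}
    (hs : 0 < s) (hy : 0 < y) : 0 < rotTranslatorRhsDerivS n r C s y := by
  have hnr : (0 : ℝ) < (n : ℝ) - r := sub_pos.mpr (by exact_mod_cast hr)
  unfold rotTranslatorRhsDerivS
  positivity

theorem tau_second_deriv_pos_at_critical_general (n r : ℕ) (hr1 : 1 ≤ r) (hr2 : r < n)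
    (C : ℝ) (hC : C = (r : ℝ) * ((n - 1).choose (r - 1) : ℝ)⁻¹)
    (F : ℝ → ℝ → ℝ)
    (hF : ∀ s y, F s y = C * Real.sqrt (1 - y ^ ((2 : ℝ) / r)) * s ^ (r - 1)
      - ((n : ℝ) - r) * y / s)
    (s₀ : ℝ) (hs₀ : 0 < s₀) (τ : ℝ → ℝ)
    (hode : ∀ s ∈ Ici s₀, HasDerivAt τ (F s (τ s)) s)
    (sstar : ℝ) (hstar : s₀ < sstar)
    (hcrit : deriv τ sstar = 0)
    (hpos : 0 < τ sstar) (hlt : τ sstar < 1) :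
    0 < deriv (deriv τ) sstar := by
  have hF' : F = rotTranslatorRhs n r C := funext₂ hF
  subst hF'
  have hsstar : 0 < sstar := hs₀.trans hstar
  have hτ : HasDerivAt τ 0 sstar := hcrit ▸ (hode sstar hstar.le).differentiableAt.hasDerivAt
  have hderiv : deriv τ =ᶠ[nhds sstar] fun t => rotTranslatorRhs n r C t (τ t) := by
    filter_upwards [Ioi_mem_nhds hstar] with t ht
    exact (hode t (Ioi_subset_Ici_self ht)).deriv
  rw [hderiv.deriv_eq,
    (hasDerivAt_rotTranslatorRhs_of_hasDerivAt_zero (by omega) C hτ hsstar.ne' hpos hlt).deriv]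
  exact rotTranslatorRhsDerivS_pos hr2 (by rw [hC]; positivity) hsstar hpos

/-- At an interior critical point s* with 0 < τ(s*) < 1, a solution of the Euclidean
rotational translator ODE satisfies τ''(s*) > 0: every such critical point is a strict
local minimum. -/
theorem tau_second_deriv_pos_at_critical (n r : ℕ) (hn : 2 ≤ n) (hr1 : 1 ≤ r) (hr2 : r < n)
    (C : ℝ) (hC : C = (r : ℝ) * ((n - 1).choose (r - 1) : ℝ)⁻¹)
    (F : ℝ → ℝ → ℝ)
    (hF : ∀ s y, F s y = C * Real.sqrt (1 - y ^ ((2 : ℝ) / r)) * s ^ (r - 1)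
      - ((n : ℝ) - r) * y / s)
    (s₀ : ℝ) (hs₀ : 0 < s₀) (τ : ℝ → ℝ)
    (hmem : ∀ s ∈ Ici s₀, τ s ∈ Icc (-1 : ℝ) 1)
    (hode : ∀ s ∈ Ici s₀, HasDerivAt τ (F s (τ s)) s)
    (sstar : ℝ) (hstar : s₀ < sstar)
    (hcrit : deriv τ sstar = 0)
    (hpos : 0 < τ sstar) (hlt : τ sstar < 1) :
    0 < deriv (deriv τ) sstar :=
  tau_second_deriv_pos_at_critical_general n r hr1 hr2 C hC F hF s₀ hs₀ τ hode sstar hstar hcrit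
    hpos hlt
end

section
/- Let n ≥ 2, 1 ≤ r < n, C = r·(binom(n-1,r-1))⁻¹. If τ : [s₀, ∞) → [-1,1] is a C¹ solution of τ'(s) = C√(1-τ(s)^(2/r))·tanh^(r-1)(s) - (n-r)·coth(s)·τ(s) (the hyperbolic-sphere case), τ is eventually monotone, and τ'(s) → 0 as s → ∞, then lim_{s→∞} τ(s) = L, where L ∈ (0,1) is the unique positive root of C√(1-L^(2/r)) = (n-r)L. -/
/-!
An eventually monotone τ with values in [-1, 1] has a limit M. Since tanh s → 1 and
coth s → 1, the right-hand side of the ODE tends to C√(1 - M^(2/r)) - (n - r)M, which must be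
the limit 0 of τ'. So M is a root of the same equation as L, and that equation has only one
root: x ↦ C√(1 - x^(2/r)) - (n - r)x is positive on (-∞, 0] and strictly
decreasing on [0, ∞).
-/

open Real Set Filter Topology

lemma Real.tanh_eq_one_sub_exp_div (s : ℝ) :
    tanh s = (1 - exp (-(2 * s))) / (1 + exp (-(2 * s))) := by
  rw [tanh_eq_sinh_div_cosh, sinh_eq, cosh_eq, show -(2 * s) = -s + -s by ring, exp_add, exp_neg]
  field_simp

lemma Real.tendsto_tanh_atTop : Tendsto tanh atTop (𝓝 1) := by
  have hexp : Tendsto (fun s : ℝ => exp (-(2 * s))) atTop (𝓝 0) :=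
    tendsto_exp_atBot.comp (tendsto_neg_atTop_atBot.comp (tendsto_id.const_mul_atTop two_pos))
  rw [show tanh = _ from funext tanh_eq_one_sub_exp_div]
  have h := ((tendsto_const_nhds (x := (1 : ℝ))).sub hexp).div (tendsto_const_nhds.add hexp)
    (by norm_num : (1 : ℝ) + 0 ≠ 0)
  rwa [sub_zero, add_zero, div_one] at h

lemma Real.tendsto_cosh_div_sinh_atTop : Tendsto (fun s => cosh s / sinh s) atTop (𝓝 1) := by
  simpa [tanh_eq_sinh_div_cosh] using tendsto_tanh_atTop.inv₀ one_ne_zero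

section
variable {C k p : ℝ}

lemma strictAntiOn_sqrt_one_sub_rpow_sub (hC : 0 ≤ C) (hk : 0 < k) (hp : 0 ≤ p) :
    StrictAntiOn (fun x => C * √(1 - x ^ p) - k * x) (Ici 0) := by
  intro x hx y _ hxy
  have : C * √(1 - y ^ p) ≤ C * √(1 - x ^ p) :=
    mul_le_mul_of_nonneg_left (sqrt_le_sqrt (by gcongr)) hC
  dsimp only
  nlinarith

lemma pos_of_sqrt_one_sub_rpow_eq (hC : 0 < C) (hk : 0 < k) (hp : 0 < p) {x : ℝ}
    (hx : C * √(1 - x ^ p) = k * x) : 0 < x := by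
  rcases lt_trichotomy x 0 with hneg | rfl | hpos
  · nlinarith [mul_nonneg hC.le (sqrt_nonneg (1 - x ^ p))]
  · simp [zero_rpow hp.ne'] at hx; linarith
  · exact hpos

lemma eq_of_sqrt_one_sub_rpow_eq (hC : 0 < C) (hk : 0 < k) (hp : 0 < p) {x y : ℝ}
    (hx : C * √(1 - x ^ p) = k * x) (hy : C * √(1 - y ^ p) = k * y) : x = y :=
  (strictAntiOn_sqrt_one_sub_rpow_sub hC.le hk hp.le).injOn
    (pos_of_sqrt_one_sub_rpow_eq hC hk hp hx).le (pos_of_sqrt_one_sub_rpow_eq hC hk hp hy).le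
    (by simp only [hx, hy, sub_self])

end

section
variable {ι α : Type*} [LinearOrder ι] [ConditionallyCompleteLinearOrder α] [TopologicalSpace α]
  [OrderTopology α] {f : ι → α} {a : ι}

lemma MonotoneOn.exists_tendsto_atTop (hf : MonotoneOn f (Ici a)) (hb : BddAbove (f '' Ici a)) :
    ∃ M, Tendsto f atTop (𝓝 M) := by
  have hmono : Monotone fun s => f (max s a) := fun s t hst =>
    hf (le_max_right s a) (le_max_right t a) (max_le_max hst le_rfl)
  have hbdd : BddAbove (range fun s => f (max s a)) :=
    hb.mono (range_subset_iff.2 fun s => mem_image_of_mem f (le_max_right s a))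
  refine ⟨_, (tendsto_atTop_ciSup hmono hbdd).congr' ?_⟩
  filter_upwards [eventually_ge_atTop a] with s hs
  rw [max_eq_left hs]

lemma AntitoneOn.exists_tendsto_atTop (hf : AntitoneOn f (Ici a)) (hb : BddBelow (f '' Ici a)) :
    ∃ M, Tendsto f atTop (𝓝 M) :=
  MonotoneOn.exists_tendsto_atTop (α := αᵒᵈ) hf.dual_right hb

end

lemma tendsto_tau_ode_rhs {C k p M : ℝ} {τ : ℝ → ℝ} (hτ : Tendsto τ atTop (𝓝 M)) (hp : 0 < p)
    (m : ℕ) :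
    Tendsto (fun s => C * √(1 - τ s ^ p) * tanh s ^ m - k * (cosh s / sinh s) * τ s) atTop
      (𝓝 (C * √(1 - M ^ p) - k * M)) := by
  have hsqrt : Tendsto (fun s => √(1 - τ s ^ p)) atTop (𝓝 √(1 - M ^ p)) :=
    (continuous_sqrt.tendsto _).comp
      (tendsto_const_nhds.sub ((continuousAt_rpow_const M p (Or.inr hp.le)).tendsto.comp hτ))
  have htanh : Tendsto (fun s => tanh s ^ m) atTop (𝓝 1) := by
    simpa using tendsto_tanh_atTop.pow m
  simpa using ((tendsto_const_nhds.mul hsqrt).mul htanh).sub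
    ((tendsto_const_nhds.mul tendsto_cosh_div_sinh_atTop).mul hτ)

theorem tau_hyperbolic_limit_general (n r : ℕ) (hr1 : 1 ≤ r) (hr2 : r < n)
    (C : ℝ) (hC : C = (r : ℝ) * ((n - 1).choose (r - 1) : ℝ)⁻¹)
    (s₀ : ℝ) (τ : ℝ → ℝ)
    (hmem : ∀ s ∈ Ici s₀, τ s ∈ Icc (-1 : ℝ) 1)
    (hode : ∀ s ∈ Ici s₀, HasDerivAt τ
      (C * Real.sqrt (1 - τ s ^ ((2 : ℝ) / r)) * Real.tanh s ^ (r - 1)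
        - ((n : ℝ) - r) * (Real.cosh s / Real.sinh s) * τ s) s)
    (hmono : ∃ a ≥ s₀, MonotoneOn τ (Ici a) ∨ AntitoneOn τ (Ici a))
    (hderiv : Tendsto (deriv τ) atTop (nhds 0))
    (L : ℝ)
    (hLroot : C * Real.sqrt (1 - L ^ ((2 : ℝ) / r)) = ((n : ℝ) - r) * L) :
    Tendsto τ atTop (nhds L) := by
  have hr : (0 : ℝ) < r := by exact_mod_cast hr1
  have hp : (0 : ℝ) < 2 / r := by positivity
  have hC0 : 0 < C := by
    have : (0 : ℝ) < (n - 1).choose (r - 1) := by exact_mod_cast Nat.choose_pos (by omega)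
    rw [hC]; positivity
  have hk : (0 : ℝ) < n - r := sub_pos.2 (by exact_mod_cast hr2)
  obtain ⟨a, ha, hmono⟩ := hmono
  have hbdd : τ '' Ici a ⊆ Icc (-1) 1 :=
    image_subset_iff.2 fun s hs => hmem s (ha.trans hs)
  obtain ⟨M, hM⟩ : ∃ M, Tendsto τ atTop (𝓝 M) := hmono.elim
    (fun h => h.exists_tendsto_atTop (bddAbove_Icc.mono hbdd))
    (fun h => h.exists_tendsto_atTop (bddBelow_Icc.mono hbdd))
  have hMroot : C * √(1 - M ^ ((2 : ℝ) / r)) = (n - r) * M := by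
    have hderivM := (tendsto_tau_ode_rhs (C := C) (k := n - r) hM hp (r - 1)).congr' <|
      (eventually_ge_atTop s₀).mono fun s hs => (hode s hs).deriv.symm
    linarith [tendsto_nhds_unique hderivM hderiv]
  rwa [← eq_of_sqrt_one_sub_rpow_eq hC0 hk hp hMroot hLroot]

/-- Asymptotics of the τ-function of rotational translators to r-MCF in ℍⁿ×ℝ:
an eventually monotone solution whose derivative tends to 0 converges to the unique
positive root L of C√(1-L^(2/r)) = (n-r)L. -/
theorem tau_hyperbolic_limit (n r : ℕ) (hn : 2 ≤ n) (hr1 : 1 ≤ r) (hr2 : r < n)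
    (C : ℝ) (hC : C = (r : ℝ) * ((n - 1).choose (r - 1) : ℝ)⁻¹)
    (s₀ : ℝ) (hs₀ : 0 < s₀) (τ : ℝ → ℝ)
    (hmem : ∀ s ∈ Ici s₀, τ s ∈ Icc (-1 : ℝ) 1)
    (hode : ∀ s ∈ Ici s₀, HasDerivAt τ
      (C * Real.sqrt (1 - τ s ^ ((2 : ℝ) / r)) * Real.tanh s ^ (r - 1)
        - ((n : ℝ) - r) * (Real.cosh s / Real.sinh s) * τ s) s)
    (hmono : ∃ a ≥ s₀, MonotoneOn τ (Ici a) ∨ AntitoneOn τ (Ici a))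
    (hderiv : Tendsto (deriv τ) atTop (nhds 0))
    (L : ℝ) (hL : L ∈ Ioo (0 : ℝ) 1)
    (hLroot : C * Real.sqrt (1 - L ^ ((2 : ℝ) / r)) = ((n : ℝ) - r) * L) :
    Tendsto τ atTop (nhds L) :=
  tau_hyperbolic_limit_general n r hr1 hr2 C hC s₀ τ hmem hode hmono hderiv L hLroot
end

section
/- Let n ≥ 2, 1 ≤ r < n, C = r·(binom(n-1,r-1))⁻¹, and F(s,y) = C√(1-y^(2/r))·tanh^(r-1)(s) - (n-r)·coth(s)·y on (0,∞)×[-1,1]. If τ : [s₀,∞) → [-1,1] solves τ' = F(s,τ) with τ(s₀) = 1 for some s₀ > 0, then τ'(s₀) < 0 and τ(s) > 0 for all s ≥ s₀. -/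
open Real Set

/-! At `y = 1` the square root vanishes and `F(s, 1) = -(n - r) coth s < 0`, so `τ` starts
downwards. At `y = 0` the damping term vanishes and `F(s, 0) = C tanh^(r-1) s > 0`, so the barrier
`y = 0` can only be crossed upwards: the fencing theorem gives `τ ≥ 0`, and a zero of `τ` after `s₀`
would be an interior minimum, where `τ' = F(s, 0)` would have to vanish. -/

theorem pos_of_deriv_pos_at_zeros {f f' : ℝ → ℝ} {a : ℝ}
    (hf : ∀ x ∈ Ici a, HasDerivAt f (f' x) x) (ha : 0 < f a)
    (hzero : ∀ x ∈ Ioi a, f x = 0 → 0 < f' x) :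
    ∀ x ∈ Ici a, 0 < f x := by
  have nonneg : ∀ x ∈ Ici a, 0 ≤ f x := by
    intro x hx
    have hle : -f x ≤ (fun _ ↦ (0 : ℝ)) x :=
      image_le_of_deriv_right_lt_deriv_boundary (f := fun y ↦ -f y) (f' := fun y ↦ -f' y)
        (B' := fun _ ↦ 0) (b := x)
        (fun y hy ↦ (hf y hy.1).continuousAt.neg.continuousWithinAt)
        (fun y hy ↦ (hf y hy.1).neg.hasDerivWithinAt) (by simpa using ha.le)
        (fun _ ↦ hasDerivAt_const _ _)
        (fun y hy hy0 ↦ by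
          rcases hy.1.eq_or_lt with rfl | hay
          · exact absurd (neg_eq_zero.mp hy0) ha.ne'
          · simpa using hzero y hay (neg_eq_zero.mp hy0))
        ⟨hx, le_rfl⟩
    simpa using hle
  intro x hx
  rcases (nonneg x hx).eq_or_lt with hx0 | hpos
  · rcases (mem_Ici.mp hx).eq_or_lt with rfl | hax
    · exact ha
    have hmin : IsLocalMin f x :=
      Filter.mem_of_superset (Ici_mem_nhds hax) fun y hy ↦ hx0 ▸ nonneg y hy
    exact absurd (hmin.hasDerivAt_eq_zero (hf x hx)) (hzero x hax hx0.symm).ne'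
  · exact hpos

theorem catenoid_field_one_neg {C k q : ℝ} {m : ℕ} (hk : 0 < k) {s : ℝ} (hs : 0 < s) :
    C * √(1 - 1 ^ q) * tanh s ^ m - k * (cosh s / sinh s) * 1 < 0 := by
  have : 0 < k * (cosh s / sinh s) := mul_pos hk (div_pos (cosh_pos s) (sinh_pos_iff.mpr hs))
  simpa using this

theorem catenoid_field_zero_pos {C k q : ℝ} {m : ℕ} (hC : 0 < C) (hq : q ≠ 0) {s : ℝ}
    (hs : 0 < s) :
    0 < C * √(1 - 0 ^ q) * tanh s ^ m - k * (cosh s / sinh s) * 0 := by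
  have htanh : 0 < tanh s := by
    rw [tanh_eq_sinh_div_cosh]
    exact div_pos (sinh_pos_iff.mpr hs) (cosh_pos s)
  simpa [zero_rpow hq] using mul_pos hC (pow_pos htanh m)

theorem hyperbolic_upper_wing_general (n r : ℕ) (hr1 : 1 ≤ r) (hr2 : r < n)
    (C : ℝ) (hC : C = (r : ℝ) * ((n - 1).choose (r - 1) : ℝ)⁻¹)
    (F : ℝ → ℝ → ℝ)
    (hF : ∀ s y, F s y = C * Real.sqrt (1 - y ^ ((2 : ℝ) / r)) * Real.tanh s ^ (r - 1)
      - ((n : ℝ) - r) * (Real.cosh s / Real.sinh s) * y)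
    (s₀ : ℝ) (hs₀ : 0 < s₀) (τ : ℝ → ℝ)
    (hode : ∀ s ∈ Ici s₀, HasDerivAt τ (F s (τ s)) s)
    (hinit : τ s₀ = 1) :
    deriv τ s₀ < 0 ∧ ∀ s ∈ Ici s₀, 0 < τ s := by
  have hr : (0 : ℝ) < r := by exact_mod_cast hr1
  have hC0 : 0 < C := hC ▸ mul_pos hr (inv_pos.mpr (by
    exact_mod_cast Nat.choose_pos (by omega : r - 1 ≤ n - 1)))
  have hnr : (0 : ℝ) < n - r := sub_pos.mpr (by exact_mod_cast hr2)
  refine ⟨?_, pos_of_deriv_pos_at_zeros hode (by rw [hinit]; exact one_pos) ?_⟩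
  · rw [(hode s₀ self_mem_Ici).deriv, hinit, hF]
    exact catenoid_field_one_neg hnr hs₀
  · intro s hs hτs
    rw [hτs, hF]
    exact catenoid_field_zero_pos hC0 (by positivity) (hs₀.trans hs)

/-- The upper-wing τ-function of the hyperbolic rotational r-translating catenoid:
a solution with τ(s₀) = 1 has τ'(s₀) < 0 and stays positive on [s₀,∞). -/
theorem hyperbolic_upper_wing (n r : ℕ) (hn : 2 ≤ n) (hr1 : 1 ≤ r) (hr2 : r < n)
    (C : ℝ) (hC : C = (r : ℝ) * ((n - 1).choose (r - 1) : ℝ)⁻¹)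
    (F : ℝ → ℝ → ℝ)
    (hF : ∀ s y, F s y = C * Real.sqrt (1 - y ^ ((2 : ℝ) / r)) * Real.tanh s ^ (r - 1)
      - ((n : ℝ) - r) * (Real.cosh s / Real.sinh s) * y)
    (s₀ : ℝ) (hs₀ : 0 < s₀) (τ : ℝ → ℝ)
    (hmem : ∀ s ∈ Ici s₀, τ s ∈ Icc (-1 : ℝ) 1)
    (hode : ∀ s ∈ Ici s₀, HasDerivAt τ (F s (τ s)) s)
    (hinit : τ s₀ = 1) :
    deriv τ s₀ < 0 ∧ ∀ s ∈ Ici s₀, 0 < τ s :=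
  hyperbolic_upper_wing_general n r hr1 hr2 C hC F hF s₀ hs₀ τ hode hinit
end

section
/- Let ρ : [0,∞) → [0,1) be continuous with ρ(0) = 0, ρ differentiable on (0,∞), and suppose the equation binom(n-1,r)·cot_ε(s)^r·ρ(s)^r + binom(n-1,r-1)·cot_ε(s)^(r-1)·ρ(s)^(r-1)·ρ'(s) = √(1-ρ(s)²) holds for s > 0, where cot₀(s) = 1/s. Then the limits L₁ = lim_{s→0⁺} ρ(s)/s and L₂ = lim_{s→0⁺} ρ'(s), if they exist in [0,∞], are both finite, and moreover L₁ = L₂. -/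
open Real Set Filter Topology

/-- Regularity at the axis for the r-bowl soliton (Euclidean case, cot₀(s) = 1/s):
if the limits L₁ of ρ(s)/s and L₂ of ρ'(s) as s → 0⁺ exist in [0,∞], then they are
both finite and equal. -/
theorem bowl_regularity_at_axis (n r : ℕ) (hn : 2 ≤ n) (hr1 : 1 ≤ r) (hr2 : r < n)
    (ρ : ℝ → ℝ)
    (hcont : ContinuousOn ρ (Ici 0)) (hρ0 : ρ 0 = 0)
    (hmem : ∀ s ∈ Ici (0 : ℝ), ρ s ∈ Ico (0 : ℝ) 1)
    (hdiff : ∀ s ∈ Ioi (0 : ℝ), DifferentiableAt ℝ ρ s)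
    (hode : ∀ s ∈ Ioi (0 : ℝ),
      ((n - 1).choose r : ℝ) * (1 / s) ^ r * ρ s ^ r
        + ((n - 1).choose (r - 1) : ℝ) * (1 / s) ^ (r - 1) * ρ s ^ (r - 1) * deriv ρ s
        = Real.sqrt (1 - ρ s ^ 2))
    (L₁ L₂ : EReal)
    (hL₁ : Tendsto (fun s => ((ρ s / s : ℝ) : EReal)) (nhdsWithin 0 (Ioi 0)) (nhds L₁))
    (hL₂ : Tendsto (fun s => ((deriv ρ s : ℝ) : EReal)) (nhdsWithin 0 (Ioi 0)) (nhds L₂)) :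
    L₁ ≠ ⊤ ∧ L₂ ≠ ⊤ ∧ L₁ = L₂ := by
  -- Step 1: L₁ = L₂ via the mean value theorem.
  have key : ∀ s ∈ Ioi (0:ℝ), ∃ c ∈ Ioo (0:ℝ) s, deriv ρ c = ρ s / s := by
    intro s hs
    have h1 : ContinuousOn ρ (Icc 0 s) := hcont.mono Icc_subset_Ici_self
    have h2 : DifferentiableOn ℝ ρ (Ioo 0 s) := fun x hx =>
      (hdiff x hx.1).differentiableWithinAt
    obtain ⟨c, hc, hc2⟩ := exists_deriv_eq_slope ρ hs h1 h2
    refine ⟨c, hc, ?_⟩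
    rw [hc2, hρ0]
    ring
  choose! c hc hceq using key
  have htc : Tendsto c (𝓝[>] (0:ℝ)) (𝓝[>] (0:ℝ)) := by
    rw [tendsto_nhdsWithin_iff]
    constructor
    · apply tendsto_of_tendsto_of_tendsto_of_le_of_le' tendsto_const_nhds
        (tendsto_id.mono_left nhdsWithin_le_nhds)
      · exact eventually_mem_nhdsWithin.mono fun s hs => ((hc s hs).1).le
      · exact eventually_mem_nhdsWithin.mono fun s hs => ((hc s hs).2).le
    · exact eventually_mem_nhdsWithin.mono fun s hs => (hc s hs).1
  have hcomp : Tendsto (fun s => ((ρ s / s : ℝ) : EReal)) (𝓝[>] (0:ℝ)) (𝓝 L₂) := by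
    apply (hL₂.comp htc).congr'
    exact eventually_mem_nhdsWithin.mono fun s hs => by
      simp [Function.comp, hceq s hs]
  have hEq : L₁ = L₂ := tendsto_nhds_unique hL₁ hcomp
  -- Step 2: L₂ ≠ ⊤.
  have hL2top : L₂ ≠ ⊤ := by
    intro htop
    rw [htop] at hcomp hL₂
    have h1 : ∀ᶠ s in 𝓝[>] (0:ℝ), (1 : EReal) < ((ρ s / s : ℝ) : EReal) :=
      hcomp.eventually (eventually_gt_nhds (by simpa using EReal.coe_lt_top 1))
    have h2 : ∀ᶠ s in 𝓝[>] (0:ℝ), (0 : EReal) < ((deriv ρ s : ℝ) : EReal) :=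
      hL₂.eventually (eventually_gt_nhds (by simp))
    obtain ⟨s, hs1, hs2, hs⟩ := (h1.and (h2.and eventually_mem_nhdsWithin)).exists
    have hspos : (0:ℝ) < s := hs
    have hx1 : (1:ℝ) < ρ s / s := by exact_mod_cast hs1
    have hd0 : (0:ℝ) < deriv ρ s := by exact_mod_cast hs2
    have hρs := hmem s hspos.le
    have heq := hode s hs
    have hsub : ((n - 1).choose r : ℝ) * (1 / s) ^ r * ρ s ^ r
        = ((n - 1).choose r : ℝ) * (ρ s / s) ^ r := by
      rw [mul_assoc, ← mul_pow]
      congr 2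
      ring
    have hC1 : (1:ℝ) ≤ ((n - 1).choose r : ℝ) := by
      exact_mod_cast Nat.choose_pos (by omega : r ≤ n - 1)
    have hxr : (1:ℝ) < (ρ s / s) ^ r := one_lt_pow₀ hx1 (by omega)
    have hterm2 : 0 ≤ ((n - 1).choose (r-1) : ℝ) * (1 / s) ^ (r-1) * ρ s ^ (r-1) * deriv ρ s := by
      have h0 : (0:ℝ) ≤ ρ s := hρs.1
      positivity
    have hsqrt : Real.sqrt (1 - ρ s ^ 2) ≤ 1 := by
      exact Real.sqrt_le_one.mpr (by nlinarith [hρs.1])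
    rw [hsub] at heq
    nlinarith [hxr, hC1, hterm2, hsqrt, heq]
  exact ⟨hEq ▸ hL2top, hL2top, hEq⟩
end

section
/- Let n ≥ 2, 1 ≤ r < n, C = r·(binom(n-1,r-1))⁻¹, and F(s,y) = C√(1-y^(2/r))·s^(r-1) - (n-r)·y/s (Euclidean case). Suppose τ : [s₀,∞) → [-1,1] solves τ' = F(s,τ), τ is monotone on [a,∞) for some a, and τ'(s) → 0 as s → ∞. Then lim_{s→∞} τ(s) = 1. -/
open Real Set Filter

private lemma exists_gt_of_hasDerivAt_pos {f : ℝ → ℝ} {x D : ℝ}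
    (h : HasDerivAt f D x) (hD : 0 < D) : ∃ t, x < t ∧ f x < f t := by
  have hs := hasDerivAt_iff_tendsto_slope.mp h
  have h1 : Tendsto (slope f x) (nhdsWithin x (Ioi x)) (nhds D) :=
    hs.mono_left (nhdsWithin_mono x fun t ht => ne_of_gt ht)
  have h2 : ∀ᶠ t in nhdsWithin x (Ioi x), 0 < slope f x t :=
    h1.eventually (eventually_gt_nhds hD)
  have h3 : ∀ᶠ t in nhdsWithin x (Ioi x), t ∈ Ioi x := eventually_mem_nhdsWithin
  obtain ⟨t, ht1, ht2⟩ := (h2.and h3).exists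
  refine ⟨t, ht2, ?_⟩
  rw [slope_def_field] at ht1
  have h5 : 0 < t - x := sub_pos.mpr ht2
  rcases div_pos_iff.mp ht1 with ⟨h6, _⟩ | ⟨_, h7⟩
  · linarith
  · linarith

/-- Euclidean asymptotics: an eventually monotone solution of the Euclidean rotational
translator ODE whose derivative tends to 0 converges to 1 at infinity. -/
theorem tau_euclidean_limit_one (n r : ℕ) (hn : 2 ≤ n) (hr1 : 1 ≤ r) (hr2 : r < n)
    (C : ℝ) (hC : C = (r : ℝ) * ((n - 1).choose (r - 1) : ℝ)⁻¹)
    (s₀ : ℝ) (hs₀ : 0 < s₀) (τ : ℝ → ℝ)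
    (hmem : ∀ s ∈ Ici s₀, τ s ∈ Icc (-1 : ℝ) 1)
    (hode : ∀ s ∈ Ici s₀, HasDerivAt τ
      (C * Real.sqrt (1 - τ s ^ ((2 : ℝ) / r)) * s ^ (r - 1)
        - ((n : ℝ) - r) * τ s / s) s)
    (a : ℝ) (ha : s₀ ≤ a)
    (hmono : MonotoneOn τ (Ici a) ∨ AntitoneOn τ (Ici a))
    (hderiv : Tendsto (deriv τ) atTop (nhds 0)) :
    Tendsto τ atTop (nhds 1) := by
  have hrR : (0:ℝ) < r := by exact_mod_cast hr1
  have hnr : (0:ℝ) < (n:ℝ) - r := by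
    have : (r:ℝ) < n := by exact_mod_cast hr2
    linarith
  have hchoose : (0:ℝ) < ((n - 1).choose (r - 1) : ℝ) := by
    exact_mod_cast Nat.choose_pos (by omega : r - 1 ≤ n - 1)
  have hCpos : 0 < C := by
    rw [hC]; exact mul_pos hrR (inv_pos.mpr hchoose)
  have hy : (0:ℝ) ≤ (2:ℝ) / r := by positivity
  -- existence of the limit
  obtain ⟨L, hL⟩ : ∃ L, Tendsto τ atTop (nhds L) := by
    rcases hmono with hm | hm
    · set g : ℝ → ℝ := fun x => τ (max x a) with hg
      have hgm : Monotone g := fun x y hxy =>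
        hm (mem_Ici.mpr (le_max_right _ _)) (mem_Ici.mpr (le_max_right _ _))
          (max_le_max hxy le_rfl)
      have hbdd : BddAbove (Set.range g) := by
        refine ⟨1, ?_⟩
        rintro _ ⟨x, rfl⟩
        exact (hmem _ (mem_Ici.mpr (ha.trans (le_max_right x a)))).2
      refine ⟨_, (tendsto_atTop_ciSup hgm hbdd).congr' ?_⟩
      filter_upwards [eventually_ge_atTop a] with x hx
      simp [hg, max_eq_left hx]
    · set g : ℝ → ℝ := fun x => τ (max x a) with hg
      have hgm : Antitone g := fun x y hxy =>
        hm (mem_Ici.mpr (le_max_right _ _)) (mem_Ici.mpr (le_max_right _ _))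
          (max_le_max hxy le_rfl)
      have hbdd : BddBelow (Set.range g) := by
        refine ⟨-1, ?_⟩
        rintro _ ⟨x, rfl⟩
        exact (hmem _ (mem_Ici.mpr (ha.trans (le_max_right x a)))).1
      refine ⟨_, (tendsto_atTop_ciInf hgm hbdd).congr' ?_⟩
      filter_upwards [eventually_ge_atTop a] with x hx
      simp [hg, max_eq_left hx]
  have hLm1 : -1 ≤ L := by
    refine ge_of_tendsto hL ?_
    filter_upwards [eventually_ge_atTop s₀] with s hs
    exact (hmem s hs).1
  have hL1 : L ≤ 1 := by
    refine le_of_tendsto hL ?_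
    filter_upwards [eventually_ge_atTop s₀] with s hs
    exact (hmem s hs).2
  -- the drift term tends to 0
  have hdrift : Tendsto (fun s => ((n:ℝ) - r) * τ s / s) atTop (nhds 0) :=
    (tendsto_const_nhds.mul hL).div_atTop tendsto_id
  -- hence the main term tends to 0
  set E : ℝ → ℝ := fun s => C * Real.sqrt (1 - τ s ^ ((2 : ℝ) / r)) * s ^ (r - 1) with hE
  have hE0 : Tendsto E atTop (nhds 0) := by
    have heq : ∀ᶠ s in atTop, deriv τ s + ((n:ℝ) - r) * τ s / s = E s := by
      filter_upwards [eventually_ge_atTop s₀] with s hs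
      have := (hode s hs).deriv
      rw [this]; ring
    have := hderiv.add hdrift
    rw [add_zero] at this
    exact this.congr' heq
  -- the sqrt term tends to 0
  have hsq0 : Tendsto (fun s => Real.sqrt (1 - τ s ^ ((2 : ℝ) / r))) atTop (nhds 0) := by
    have hCs : Tendsto (fun s => C * Real.sqrt (1 - τ s ^ ((2 : ℝ) / r))) atTop (nhds 0) := by
      refine tendsto_of_tendsto_of_tendsto_of_le_of_le' tendsto_const_nhds hE0 ?_ ?_
      · filter_upwards with s
        positivity
      · filter_upwards [eventually_ge_atTop (1:ℝ)] with s hs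
        have h1 : (1:ℝ) ≤ s ^ (r - 1) := one_le_pow₀ hs
        have h2 : 0 ≤ C * Real.sqrt (1 - τ s ^ ((2 : ℝ) / r)) := by positivity
        calc C * Real.sqrt (1 - τ s ^ ((2 : ℝ) / r))
            = C * Real.sqrt (1 - τ s ^ ((2 : ℝ) / r)) * 1 := by ring
          _ ≤ E s := by
              rw [hE]
              exact mul_le_mul_of_nonneg_left h1 h2
    have := hCs.div_const C
    rw [zero_div] at this
    refine this.congr ?_
    intro s
    field_simp
  -- the sqrt term tends to √(1 - L^(2/r))
  have hpowL : Tendsto (fun s => τ s ^ ((2 : ℝ) / r)) atTop (nhds (L ^ ((2 : ℝ) / r))) :=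
    (Real.continuousAt_rpow_const L _ (Or.inr hy)).tendsto.comp hL
  have hsqL : Tendsto (fun s => Real.sqrt (1 - τ s ^ ((2 : ℝ) / r))) atTop
      (nhds (Real.sqrt (1 - L ^ ((2 : ℝ) / r)))) :=
    (Real.continuous_sqrt.continuousAt).tendsto.comp (tendsto_const_nhds.sub hpowL)
  have hzero : Real.sqrt (1 - L ^ ((2 : ℝ) / r)) = 0 := tendsto_nhds_unique hsqL hsq0
  have hge1 : (1:ℝ) ≤ L ^ ((2 : ℝ) / r) := by
    have := Real.sqrt_eq_zero'.mp hzero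
    linarith
  -- hence |L| = 1
  have hyp : (0:ℝ) < (2:ℝ) / r := by positivity
  have habs : |L| = 1 := by
    by_contra hne
    have habs1 : |L| ≤ 1 := abs_le.mpr ⟨hLm1, hL1⟩
    have hlt : |L| < 1 := lt_of_le_of_ne habs1 hne
    have h1 : L ^ ((2 : ℝ) / r) ≤ |L ^ ((2 : ℝ) / r)| := le_abs_self _
    have h2 : |L ^ ((2 : ℝ) / r)| ≤ |L| ^ ((2 : ℝ) / r) := Real.abs_rpow_le_abs_rpow _ _
    have h3 : |L| ^ ((2 : ℝ) / r) < 1 := Real.rpow_lt_one (abs_nonneg _) hlt hyp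
    linarith
  rcases abs_eq (by norm_num : (0:ℝ) ≤ 1) |>.mp habs with hLe | hLe
  · rwa [hLe] at hL
  -- rule out L = -1
  exfalso
  subst hLe
  have hneg : ∀ᶠ s in atTop, τ s < 0 := hL.eventually (gt_mem_nhds (by norm_num : (-1:ℝ) < 0))
  obtain ⟨s₁, hs₁, hτneg⟩ := ((eventually_gt_atTop (max a s₀)).and hneg).exists
  have hs₁a : a < s₁ := lt_of_le_of_lt (le_max_left a s₀) hs₁
  have hs₁s₀ : s₀ < s₁ := lt_of_le_of_lt (le_max_right a s₀) hs₁
  have hs₁pos : 0 < s₁ := lt_trans hs₀ hs₁s₀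
  have hD : 0 < C * Real.sqrt (1 - τ s₁ ^ ((2 : ℝ) / r)) * s₁ ^ (r - 1)
      - ((n : ℝ) - r) * τ s₁ / s₁ := by
    have h1 : 0 ≤ C * Real.sqrt (1 - τ s₁ ^ ((2 : ℝ) / r)) * s₁ ^ (r - 1) := by positivity
    have h2 : ((n : ℝ) - r) * τ s₁ / s₁ < 0 :=
      div_neg_of_neg_of_pos (mul_neg_of_pos_of_neg hnr hτneg) hs₁pos
    linarith
  obtain ⟨t, htgt, hft⟩ := exists_gt_of_hasDerivAt_pos (hode s₁ (le_of_lt hs₁s₀)) hD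
  have hta : t ∈ Ici a := mem_Ici.mpr (le_of_lt (lt_trans hs₁a htgt))
  rcases hmono with hm | hm
  · -- monotone: τ ≤ -1 on [a, ∞), but τ s₁ ≥ -1, so τ t ≤ -1 ≤ τ s₁ < τ t
    have hle : τ t ≤ -1 := by
      refine ge_of_tendsto hL ?_
      filter_upwards [eventually_ge_atTop t] with u hu
      exact hm hta (mem_Ici.mpr (hta.trans hu)) hu
    have hge : -1 ≤ τ s₁ := (hmem s₁ (le_of_lt hs₁s₀)).1
    linarith
  · have := hm (mem_Ici.mpr (le_of_lt hs₁a)) hta (le_of_lt htgt)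
    linarith
end
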